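/- Let ξ, η ∈ c₀* with ξ ≼ η. Then there exists an orthostochastic matrix Q such that ξ_i = ∑_{j=1}^∞ Q_{ij} η_j for every i. -/

import Mathlib

/-!
Let `deficit n = ∑ j < n, (η j - ξ j) ≥ 0` and `surplus n = deficit n + η n`. If the surplus
vanishes somewhere, then `ξ` and `η` vanish from there on and have equal sums before, so Horn's
finite theorem (a vector majorized by a nonincreasing `y` is `Q y` for an orthostochastic `Q`,
proved with plane rotations) suffices.

Otherwise strong majorization makes `liminf surplus = 0`, so there are `0 = nk 0 < nk 1 < ⋯`
along which the surplus tends to `0` and such that `surplus (nk (k + 1)) ≤ surplus m` for all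
`m ≤ nk (k + 1)`. The latter makes `(ξ (nk k), …, ξ (nk (k + 1) - 1), surplus (nk (k + 1)))`
majorized by `(surplus (nk k), η (nk k + 1), …, η (nk (k + 1)))`, and Horn gives an orthogonal
block `W k`. The blocks are chained into a staircase: the last row of stage `k` is a unit carry
vector `c` with `∑ j, c j ^ 2 * η j = surplus (nk k)`, and it takes the place of the first
coordinate of block `k`. Rows are finitely supported, hence orthonormal with the right values;
columns are orthonormal in the limit because each fixed entry of the carry satisfies
`c j ^ 2 ≤ C j * surplus (nk K) → 0`.
-/

noncomputable section

open Filter Finset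

/-- `ξ ∈ c₀*`: a nonnegative, nonincreasing sequence converging to `0`
(indexed from `0` here; the paper indexes from `1`). -/
def IsCoStar (ξ : ℕ → ℝ) : Prop :=
  (∀ n, 0 ≤ ξ n) ∧ Antitone ξ ∧ Tendsto ξ atTop (nhds 0)

/-- `ξ ≺ η` (η majorizes ξ): all partial sums of `ξ` are dominated by those of `η`. -/
def Maj (ξ η : ℕ → ℝ) : Prop :=
  ∀ n : ℕ, ∑ j ∈ range n, ξ j ≤ ∑ j ∈ range n, η j

/-- `ξ ≼ η` (η strongly majorizes ξ): `ξ ≺ η` and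
`liminf_n ∑_{j<n} (η_j - ξ_j) = 0` (the liminf taken in the extended reals). -/
def SMaj (ξ η : ℕ → ℝ) : Prop :=
  Maj ξ η ∧
    liminf (fun n => ((∑ j ∈ range n, (η j - ξ j) : ℝ) : EReal)) atTop = 0

/-- A matrix `U : ℕ × ℕ → ℝ` is orthogonal if its rows form an orthonormal family in ℓ²
and its columns form an orthonormal family in ℓ². -/
def OrthogonalMatrix (U : ℕ → ℕ → ℝ) : Prop :=
  (∀ i i', HasSum (fun j => U i j * U i' j) (if i = i' then (1 : ℝ) else 0)) ∧
  (∀ j j', HasSum (fun i => U i j * U i j') (if j = j' then (1 : ℝ) else 0))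

/-- A matrix `Q` is orthostochastic if it is the entrywise square of an orthogonal matrix. -/
def Orthostochastic (Q : ℕ → ℕ → ℝ) : Prop :=
  ∃ U : ℕ → ℕ → ℝ, OrthogonalMatrix U ∧ ∀ i j, Q i j = (U i j) ^ 2

def OrthonormalRows (N : ℕ) (M : ℕ → ℕ → ℝ) : Prop :=
  ∀ i < N, ∀ i' < N, ∑ j ∈ range N, M i j * M i' j = if i = i' then 1 else 0

lemma orthonormalRows_iff_mul_transpose {N : ℕ} {M : ℕ → ℕ → ℝ} :
    OrthonormalRows N M ↔ (Matrix.of fun i j : Fin N => M i j) *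
      (Matrix.of fun i j : Fin N => M i j).transpose = 1 := by
  simp only [OrthonormalRows, ← Matrix.ext_iff, Matrix.mul_apply, Matrix.transpose_apply,
    Matrix.of_apply, Matrix.one_apply, Fin.ext_iff, Fin.forall_iff]
  exact forall₂_congr fun i _ => forall₂_congr fun i' _ => by
    rw [Fin.sum_univ_eq_sum_range (fun j => M i j * M i' j)]

lemma OrthonormalRows.swap {N : ℕ} {M : ℕ → ℕ → ℝ} (h : OrthonormalRows N M) :
    OrthonormalRows N (Function.swap M) := by
  rw [orthonormalRows_iff_mul_transpose] at h ⊢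
  exact mul_eq_one_comm.mp h

def IsOrthostochasticImage (N : ℕ) (x y : ℕ → ℝ) : Prop :=
  ∃ U : ℕ → ℕ → ℝ, OrthonormalRows N U ∧ ∀ i < N, ∑ j ∈ range N, U i j ^ 2 * y j = x i

/-- Weak majorization of `x` by `y`, in the form that is valid when `y` is nonincreasing. -/
def Submajorized (N : ℕ) (x y : ℕ → ℝ) : Prop :=
  ∀ s ⊆ range N, ∑ i ∈ s, x i ≤ ∑ i ∈ range #s, y i

section Swap

variable {N p q : ℕ} {x y : ℕ → ℝ}

lemma swap_lt_of_lt (hp : p < N) (hq : q < N) {i : ℕ} (hi : i < N) : Equiv.swap p q i < N := by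
  rw [Equiv.swap_apply_def]; split_ifs <;> assumption

lemma sum_range_comp_swap (hp : p < N) (hq : q < N) (f : ℕ → ℝ) :
    ∑ i ∈ range N, f (Equiv.swap p q i) = ∑ i ∈ range N, f i :=
  Equiv.Perm.sum_comp _ _ _ fun i hi => by
    obtain ⟨-, rfl | rfl⟩ := Equiv.swap_apply_ne_self_iff.mp hi <;> simpa

lemma Submajorized.comp_swap (hp : p < N) (hq : q < N) (h : Submajorized N x y) :
    Submajorized N (x ∘ Equiv.swap p q) y := by
  intro s hs
  have hmap : s.map (Equiv.swap p q).toEmbedding ⊆ range N := by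
    simp only [subset_iff, Finset.mem_map, mem_range]
    rintro _ ⟨i, hi, rfl⟩
    exact swap_lt_of_lt hp hq (mem_range.mp (hs hi))
  simpa using h _ hmap

lemma IsOrthostochasticImage.of_comp_swap (hp : p < N) (hq : q < N)
    (h : IsOrthostochasticImage N (x ∘ Equiv.swap p q) y) : IsOrthostochasticImage N x y := by
  obtain ⟨U, hU, hval⟩ := h
  refine ⟨fun i => U (Equiv.swap p q i), fun i hi i' hi' => ?_, fun i hi => ?_⟩
  · simpa [(Equiv.swap p q).injective.eq_iff] using
      hU _ (swap_lt_of_lt hp hq hi) _ (swap_lt_of_lt hp hq hi')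
  · simpa using hval _ (swap_lt_of_lt hp hq hi)

end Swap

def mergeAt (q : ℕ) (v : ℝ) (w : ℕ → ℝ) (u : ℕ) : ℝ :=
  if u < q then w u else if u = q then v else w (u + 1)

lemma sum_range_mergeAt {q n : ℕ} (hq : q < n) (v : ℝ) (w : ℕ → ℝ) :
    ∑ u ∈ range n, mergeAt q v w u = ∑ j ∈ range (n + 1), w j - (w q + w (q + 1)) + v := by
  induction n, hq using Nat.le_induction with
  | base =>
    have : ∑ u ∈ range q, mergeAt q v w u = ∑ u ∈ range q, w u :=
      sum_congr rfl fun u hu => if_pos (mem_range.mp hu)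
    rw [sum_range_succ, sum_range_succ, sum_range_succ, this]
    simp only [mergeAt, lt_irrefl, if_false, if_true]
    ring
  | succ n hqn ih =>
    rw [sum_range_succ, ih, sum_range_succ _ (n + 1)]
    simp only [mergeAt, if_neg (show ¬n < q by omega), if_neg (show n ≠ q by omega)]
    ring

lemma antitoneOn_mergeAt {n q : ℕ} {y : ℕ → ℝ} {v : ℝ}
    (hy : AntitoneOn y (Set.Iio (n + 1))) (hv₁ : y (q + 1) ≤ v) (hv₂ : v ≤ y q) :
    AntitoneOn (mergeAt q v y) (Set.Iio n) := by
  intro a ha b hb hab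
  simp only [Set.mem_Iio] at ha hb
  have hy' : ∀ i j, i ≤ j → j < n + 1 → y j ≤ y i := fun i j hij hj =>
    hy (show i < n + 1 by omega) hj hij
  simp only [mergeAt]
  split_ifs <;> first
    | exact le_rfl | omega
    | exact hy' _ _ (by omega) (by omega)
    | exact (hy' _ _ (by omega) (by omega)).trans hv₁
    | exact hv₂.trans (hy' _ _ (by omega) (by omega))

section Rotation

variable (q : ℕ) (c s : ℝ)

def splitAt (v : ℕ → ℝ) (j : ℕ) : ℝ :=
  if j < q then v j else if j = q then -s * v q else if j = q + 1 then c * v q else v (j - 1)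

def givensRow (j : ℕ) : ℝ :=
  if j = q then c else if j = q + 1 then s else 0

variable {q} {n : ℕ}

lemma sum_splitAt_mul_splitAt (hq : q < n) (v w z : ℕ → ℝ) :
    ∑ j ∈ range (n + 1), splitAt q c s v j * splitAt q c s w j * z j =
      ∑ u ∈ range n, v u * w u * mergeAt q (s ^ 2 * z q + c ^ 2 * z (q + 1)) z u := by
  set F := fun j => splitAt q c s v j * splitAt q c s w j * z j
  have hF := sum_range_mergeAt hq (F q + F (q + 1)) F
  rw [sub_add_cancel] at hF
  rw [← hF]
  refine sum_congr rfl fun u _ => ?_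
  rcases lt_trichotomy u q with h | rfl | h
  · simp [F, mergeAt, splitAt, h]
  · simp [F, mergeAt, splitAt]
    ring
  · simp [F, mergeAt, splitAt, h.not_gt, h.ne', show ¬u + 1 < q by omega, show u + 1 ≠ q by omega]

lemma sum_givensRow_mul (hq : q < n) (f : ℕ → ℝ) :
    ∑ j ∈ range (n + 1), givensRow q c s j * f j = c * f q + s * f (q + 1) := by
  rw [sum_eq_add q (q + 1) (by omega)]
  · simp [givensRow]
  · intro j _ hj
    simp [givensRow, hj.1, hj.2]
  · intro h; simp at h; omega
  · intro h; simp at h; omega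

end Rotation

/-- The new row is `(c, s)` in the coordinates `q, q + 1`; coordinate `q` of the smaller problem
is spread over `q, q + 1` along the orthogonal direction `(-s, c)`. -/
lemma IsOrthostochasticImage.succ {n q : ℕ} (hq : q < n) {x y : ℕ → ℝ} {c s : ℝ}
    (hcs : c ^ 2 + s ^ 2 = 1) (hx : c ^ 2 * y q + s ^ 2 * y (q + 1) = x n)
    (h : IsOrthostochasticImage n x (mergeAt q (s ^ 2 * y q + c ^ 2 * y (q + 1)) y)) :
    IsOrthostochasticImage (n + 1) x y := by
  obtain ⟨U, hU, hval⟩ := h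
  set V : ℕ → ℕ → ℝ := fun i => if i < n then splitAt q c s (U i) else givensRow q c s
  have hV : ∀ i < n, V i = splitAt q c s (U i) := fun i hi => if_pos hi
  have hVn : V n = givensRow q c s := if_neg (lt_irrefl n)
  have hgivens_split : ∀ i < n, ∑ j ∈ range (n + 1), givensRow q c s j * V i j = 0 := by
    intro i hi
    rw [sum_givensRow_mul c s hq, hV i hi]
    simp only [splitAt, lt_irrefl, if_false, if_true, show q + 1 ≠ q by omega,
      show ¬q + 1 < q by omega]
    ring
  refine ⟨V, fun i hi i' hi' => ?_, fun i hi => ?_⟩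
  · rcases Nat.lt_succ_iff_lt_or_eq.mp hi with hi | rfl <;>
      rcases Nat.lt_succ_iff_lt_or_eq.mp hi' with hi' | rfl
    · have h1 := sum_splitAt_mul_splitAt c s hq (U i) (U i') fun _ => 1
      have hmerge : ∀ u, mergeAt q (s ^ 2 + c ^ 2) (fun _ => (1 : ℝ)) u = 1 := by
        intro u; simp only [mergeAt]; split_ifs <;> linarith
      simp only [mul_one, hmerge] at h1
      rw [hV i hi, hV i' hi', h1, hU i hi i' hi']
    · rw [if_neg hi.ne, ← hgivens_split i hi]
      exact sum_congr rfl fun j _ => by rw [hVn, mul_comm]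
    · simp_rw [hVn, hgivens_split i' hi', if_neg hi'.ne']
    · rw [hVn, sum_givensRow_mul c s hq, if_pos rfl]
      simp only [givensRow, if_true, show q + 1 ≠ q by omega, if_false]
      linear_combination hcs
  · rcases Nat.lt_succ_iff_lt_or_eq.mp hi with hi | rfl
    · have h1 := sum_splitAt_mul_splitAt c s hq (U i) (U i) y
      simp only [← sq] at h1
      rw [hV i hi, h1, hval i hi]
    · simp_rw [hVn, sq, mul_assoc, sum_givensRow_mul c s hq]
      simp only [givensRow, if_true, show q + 1 ≠ q by omega, if_false]
      linear_combination hx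

lemma submajorized_mergeAt {n q : ℕ} (hq : q < n) {x y : ℕ → ℝ}
    (hy : AntitoneOn y (Set.Iio (n + 1))) (hxy : Submajorized (n + 1) x y)
    (hmax : ∀ i < n, x i ≤ x n) (hxq : x n ≤ y q) :
    Submajorized n x (mergeAt q (y q + y (q + 1) - x n) y) := by
  intro s hs
  have hns : n ∉ s := fun h => by simpa using hs h
  rcases le_or_gt #s q with hsq | hsq
  · have hmerge : ∑ u ∈ range #s, mergeAt q (y q + y (q + 1) - x n) y u = ∑ u ∈ range #s, y u :=
      sum_congr rfl fun u hu => if_pos (by have := mem_range.mp hu; omega)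
    rw [hmerge]
    calc ∑ i ∈ s, x i ≤ #s • x n :=
          sum_le_card_nsmul _ _ _ fun i hi => hmax i (by simpa using hs hi)
      _ ≤ #(range #s) • y q := by rw [card_range]; exact nsmul_le_nsmul_right hxq _
      _ ≤ ∑ u ∈ range #s, y u := card_nsmul_le_sum _ _ _ fun u hu => by
        have := mem_range.mp hu
        exact hy (show u < n + 1 by omega) (show q < n + 1 by omega) (by omega)
  · have hins := hxy (insert n s) (insert_subset (by simp) (hs.trans (by simp)))
    rw [sum_insert hns, card_insert_of_notMem hns] at hins
    rw [sum_range_mergeAt hsq]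
    linarith

lemma le_of_sum_range_eq {n : ℕ} {x y : ℕ → ℝ} (hy : AntitoneOn y (Set.Iio (n + 1)))
    (hmax : ∀ i < n + 1, x i ≤ x n) (hsum : ∑ i ∈ range (n + 1), x i = ∑ i ∈ range (n + 1), y i) :
    y n ≤ x n := by
  have h₁ := sum_le_card_nsmul (range (n + 1)) x (x n) fun i hi => hmax i (mem_range.mp hi)
  have h₂ := card_nsmul_le_sum (range (n + 1)) y (y n) fun i hi =>
    hy (mem_range.mp hi) n.lt_succ_self (mem_range_succ_iff.mp hi)
  rw [card_range, nsmul_eq_mul] at h₁ h₂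
  exact le_of_mul_le_mul_left (by linarith) (by positivity : (0 : ℝ) < (n + 1 : ℕ))

lemma exists_succ_le_le {y : ℕ → ℝ} {a : ℝ} (h0 : a ≤ y 0) {n : ℕ} (hn : y (n + 1) ≤ a) :
    ∃ q ≤ n, y (q + 1) ≤ a ∧ a ≤ y q := by
  induction n with
  | zero => exact ⟨0, le_rfl, hn, h0⟩
  | succ n ih =>
    by_cases h : a ≤ y (n + 1)
    · exact ⟨n + 1, le_rfl, hn, h⟩
    · obtain ⟨q, hq, hq'⟩ := ih (not_le.mp h).le
      exact ⟨q, by omega, hq'⟩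

lemma exists_sq_add_sq_eq_one_and_eq {a b t : ℝ} (hb : b ≤ t) (ha : t ≤ a) :
    ∃ c s : ℝ, c ^ 2 + s ^ 2 = 1 ∧ c ^ 2 * a + s ^ 2 * b = t := by
  rcases (hb.trans ha).eq_or_lt with hab | hab
  · exact ⟨1, 0, by norm_num, by nlinarith⟩
  have hr₀ : 0 ≤ (t - b) / (a - b) := div_nonneg (by linarith) (by linarith)
  have hr₁ : (t - b) / (a - b) ≤ 1 := (div_le_one (by linarith)).mpr (by linarith)
  refine ⟨√((t - b) / (a - b)), √(1 - (t - b) / (a - b)), ?_, ?_⟩ <;>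
    rw [Real.sq_sqrt hr₀, Real.sq_sqrt (by linarith)]
  · ring
  · field_simp
    ring

/-- Horn's theorem. Once the largest entry of `x` is moved to position `n`, it lies between two
consecutive entries `y (q + 1) ≤ x n ≤ y q`; a rotation in the coordinates `q, q + 1` then
reduces the problem to dimension `n`. -/
theorem isOrthostochasticImage_of_submajorized {N : ℕ} {x y : ℕ → ℝ}
    (hy : AntitoneOn y (Set.Iio N)) (hxy : Submajorized N x y)
    (hsum : ∑ i ∈ range N, x i = ∑ i ∈ range N, y i) : IsOrthostochasticImage N x y := by
  induction N generalizing x y with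
  | zero => exact ⟨0, fun i hi => absurd hi i.not_lt_zero, fun i hi => absurd hi i.not_lt_zero⟩
  | succ n ih =>
    rcases Nat.eq_zero_or_pos n with rfl | hn
    · refine ⟨fun _ _ => 1, fun i hi i' hi' => ?_, fun i hi => ?_⟩
      · simp [show i = 0 by omega, show i' = 0 by omega]
      · simpa [show i = 0 by omega] using hsum.symm
    obtain ⟨p, hp, hpmax⟩ := exists_max_image (range (n + 1)) x ⟨0, by simp⟩
    have hp : p < n + 1 := mem_range.mp hp
    refine .of_comp_swap hp n.lt_succ_self ?_
    set x' := x ∘ Equiv.swap p n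
    have hxy' := hxy.comp_swap hp n.lt_succ_self
    have hsum' : ∑ i ∈ range (n + 1), x' i = ∑ i ∈ range (n + 1), y i :=
      (sum_range_comp_swap hp n.lt_succ_self x).trans hsum
    have hmax : ∀ i < n + 1, x' i ≤ x' n := fun i hi => by
      simpa [x'] using hpmax _ (mem_range.mpr (swap_lt_of_lt hp n.lt_succ_self hi))
    have hle_y₀ : x' n ≤ y 0 := by simpa [x'] using hxy' {n} (by simp)
    have hy_le : y n ≤ x' n := le_of_sum_range_eq hy hmax hsum'
    obtain ⟨q, hq, hq₁, hq₂⟩ :=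
      exists_succ_le_le hle_y₀ (n := n - 1) (by rwa [Nat.sub_add_cancel hn])
    have hq : q < n := by omega
    obtain ⟨c, s, hcs, hval⟩ := exists_sq_add_sq_eq_one_and_eq hq₁ hq₂
    refine .succ hq hcs hval ?_
    rw [show s ^ 2 * y q + c ^ 2 * y (q + 1) = y q + y (q + 1) - x' n by
      linear_combination (y q + y (q + 1)) * hcs - hval]
    refine ih (antitoneOn_mergeAt hy (by linarith) (by linarith))
      (submajorized_mergeAt hq hy hxy' (fun i hi => hmax i (by omega)) hq₂) ?_
    rw [sum_range_mergeAt hq, ← hsum', sum_range_succ]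
    ring

lemma sum_le_sum_range_card {f : ℕ → ℝ} (hf : Antitone f) (s : Finset ℕ) :
    ∑ i ∈ s, f i ≤ ∑ i ∈ range #s, f i := by
  induction s using Finset.induction_on_max with
  | empty => simp
  | insert a s ha ih =>
    have has : a ∉ s := fun h => lt_irrefl a (ha a h)
    have hcard : #s ≤ a := by
      simpa using card_le_card (show s ⊆ range a from fun x hx => mem_range.mpr (ha x hx))
    rw [sum_insert has, card_insert_of_notMem has, sum_range_succ]
    linarith [hf hcard]

lemma Maj.submajorized {ξ η : ℕ → ℝ} (h : Maj ξ η) (hξ : Antitone ξ) (N : ℕ) :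
    Submajorized N ξ η :=
  fun s _ => (sum_le_sum_range_card hξ s).trans (h #s)

def deficit (ξ η : ℕ → ℝ) (n : ℕ) : ℝ := ∑ j ∈ range n, (η j - ξ j)

def surplus (ξ η : ℕ → ℝ) (n : ℕ) : ℝ := deficit ξ η n + η n

section Surplus

variable {ξ η : ℕ → ℝ}

lemma Maj.deficit_nonneg (h : Maj ξ η) (n : ℕ) : 0 ≤ deficit ξ η n := by
  simpa [deficit, sum_sub_distrib] using h n

lemma deficit_add (P m : ℕ) :
    deficit ξ η (P + m) = deficit ξ η P + ∑ t ∈ range m, (η (P + t) - ξ (P + t)) :=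
  sum_range_add _ _ _

lemma sum_shift_eq_deficit_sub_add (P m : ℕ) :
    ∑ t ∈ range m, ξ (P + t) = deficit ξ η P - deficit ξ η (P + m) + ∑ t ∈ range m, η (P + t) := by
  rw [deficit_add, sum_sub_distrib]
  ring

lemma Maj.surplus_nonneg (h : Maj ξ η) (hη₀ : ∀ n, 0 ≤ η n) (n : ℕ) : 0 ≤ surplus ξ η n :=
  add_nonneg (h.deficit_nonneg n) (hη₀ n)

lemma SMaj.frequently_surplus_lt (h : SMaj ξ η) (hη : Tendsto η atTop (nhds 0)) {ε : ℝ}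
    (hε : 0 < ε) : ∃ᶠ n in atTop, surplus ξ η n < ε := by
  have hdef : ∃ᶠ n in atTop, deficit ξ η n < ε / 2 := by
    have hlim : liminf (fun n => ((deficit ξ η n : ℝ) : EReal)) atTop < ((ε / 2 : ℝ) : EReal) := by
      unfold deficit
      rw [h.2]
      exact_mod_cast half_pos hε
    exact (frequently_lt_of_liminf_lt (h := hlim)).mono fun n hn => by exact_mod_cast hn
  refine (hdef.and_eventually (hη.eventually_lt_const (half_pos hε))).mono fun n hn => ?_
  rw [surplus]
  linarith [hn.1, hn.2]

lemma surplus_succ_eq_zero (hξ₀ : ∀ n, 0 ≤ ξ n) (hη₀ : ∀ n, 0 ≤ η n) (hη : Antitone η)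
    (hmaj : Maj ξ η) {n : ℕ} (hn : surplus ξ η n = 0) :
    surplus ξ η (n + 1) = 0 ∧ ξ n = 0 ∧ η n = 0 := by
  have hd := hmaj.deficit_nonneg n
  have hd' := hmaj.deficit_nonneg (n + 1)
  have hsucc : deficit ξ η (n + 1) = deficit ξ η n + (η n - ξ n) := sum_range_succ _ _
  rw [surplus] at hn ⊢
  have hηn : η n = 0 := by linarith [hη₀ n]
  have hξn : ξ n = 0 := by linarith [hξ₀ n]
  have hηn' : η (n + 1) = 0 := le_antisymm (hηn ▸ hη n.le_succ) (hη₀ _)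
  exact ⟨by linarith, hξn, hηn⟩

end Surplus

lemma exists_strictMono_forall_le_tendsto_zero {g : ℕ → ℝ} (hg : ∀ n, 0 < g n)
    (h : ∀ ε > 0, ∃ᶠ n in atTop, g n < ε) :
    ∃ φ : ℕ → ℕ, StrictMono φ ∧ φ 0 = 0 ∧ (∀ k, ∀ m ≤ φ k, g (φ k) ≤ g m) ∧
      Tendsto (g ∘ φ) atTop (nhds 0) := by
  classical
  have hnext : ∀ n, ∃ m, n < m ∧ g m < g n / 2 := fun n =>
    (frequently_atTop.mp (h _ (half_pos (hg n))) (n + 1)).imp fun m hm => ⟨hm.1, hm.2⟩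
  set next := fun n => Nat.find (hnext n)
  have hnext_spec : ∀ n, n < next n ∧ g (next n) < g n / 2 := fun n => Nat.find_spec (hnext n)
  have hnext_min : ∀ n m, n < m → m < next n → g n / 2 ≤ g m := fun n m h₁ h₂ =>
    not_lt.mp fun h₃ => Nat.find_min (hnext n) h₂ ⟨h₁, h₃⟩
  set φ := fun k => next^[k] 0
  have hφ : ∀ k, φ (k + 1) = next (φ k) := fun k => Function.iterate_succ_apply' _ _ _
  refine ⟨φ, strictMono_nat_of_lt_succ fun k => hφ k ▸ (hnext_spec _).1, rfl, fun k => ?_, ?_⟩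
  · induction k with
    | zero => intro m hm; rw [Nat.le_zero.mp hm]; exact le_rfl
    | succ k ih =>
      intro m hm
      rw [hφ] at hm ⊢
      have hhalf := (hnext_spec (φ k)).2
      rcases le_or_gt m (φ k) with h₁ | h₁
      · linarith [ih m h₁, hg (φ k)]
      · rcases hm.lt_or_eq with h₂ | rfl
        · linarith [hnext_min _ _ h₁ h₂]
        · exact le_rfl
  · have hbound : ∀ k, g (φ k) ≤ g 0 * (1 / 2) ^ k := by
      intro k
      induction k with
      | zero => simp [φ]
      | succ k ih => rw [hφ, pow_succ]; linarith [(hnext_spec (φ k)).2]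
    refine squeeze_zero (fun k => (hg _).le) hbound ?_
    simpa using (tendsto_pow_atTop_nhds_zero_of_lt_one (by norm_num : (0 : ℝ) ≤ 1 / 2)
      (by norm_num)).const_mul (g 0)

section Block

variable (ξ η : ℕ → ℝ) (P : ℕ)

/-- On the block `P, …, P + L` the surplus at `P` enters as an extra source entry and the surplus at
`P + L` leaves as an extra target entry: they are what the carry vector brings in and passes on. -/
def blockSource (u : ℕ) : ℝ := if u = 0 then surplus ξ η P else η (P + u)

def blockTarget (L t : ℕ) : ℝ := if t = L then surplus ξ η (P + L) else ξ (P + t)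

variable {ξ η P}

lemma sum_range_blockSource (m : ℕ) :
    ∑ u ∈ range (m + 1), blockSource ξ η P u = deficit ξ η P + ∑ u ∈ range (m + 1), η (P + u) := by
  rw [sum_range_succ', sum_range_succ' (fun u => η (P + u))]
  simp only [blockSource, ↓reduceIte, Nat.add_one_ne_zero, surplus, add_zero]
  ring

lemma sum_blockTarget_of_notMem {L : ℕ} {s : Finset ℕ} (hL : L ∉ s) :
    ∑ t ∈ s, blockTarget ξ η P L t = ∑ t ∈ s, ξ (P + t) :=
  sum_congr rfl fun t ht => if_neg (by rintro rfl; exact hL ht)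

lemma submajorized_blockTarget (hξ : Antitone ξ) (hmaj : Maj ξ η) {L : ℕ}
    (hmin : ∀ m ≤ L, surplus ξ η (P + L) ≤ surplus ξ η (P + m)) :
    Submajorized (L + 1) (blockTarget ξ η P L) (blockSource ξ η P) := by
  have hshift : Antitone fun t => ξ (P + t) := fun a b hab => hξ (by omega)
  intro s hs
  by_cases hL : L ∈ s
  · have hL' : L ∉ s.erase L := notMem_erase L s
    have hcard : #(s.erase L) ≤ L := by
      have : s.erase L ⊆ range L := fun t ht => by
        have := mem_range.mp (hs (mem_of_mem_erase ht))
        exact mem_range.mpr (by have := ne_of_mem_erase ht; omega)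
      simpa using card_le_card this
    rw [← insert_erase hL, sum_insert hL', card_insert_of_notMem hL',
      sum_blockTarget_of_notMem hL', sum_range_blockSource, sum_range_succ]
    have h₁ := sum_le_sum_range_card hshift (s.erase L)
    have h₂ := hmin _ hcard
    rw [sum_shift_eq_deficit_sub_add (η := η)] at h₁
    simp only [blockTarget, ↓reduceIte, surplus] at h₂ ⊢
    linarith
  · rw [sum_blockTarget_of_notMem hL]
    have h₁ := sum_le_sum_range_card hshift s
    rw [sum_shift_eq_deficit_sub_add (η := η)] at h₁
    rcases hs : #s with _ | m
    · simp [card_eq_zero.mp hs]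
    · rw [hs] at h₁
      rw [sum_range_blockSource]
      linarith [hmaj.deficit_nonneg (P + (m + 1))]

lemma isOrthostochasticImage_block (hξ : Antitone ξ) (hη : Antitone η) (hmaj : Maj ξ η) {L : ℕ}
    (hmin : ∀ m ≤ L, surplus ξ η (P + L) ≤ surplus ξ η (P + m)) :
    IsOrthostochasticImage (L + 1) (blockTarget ξ η P L) (blockSource ξ η P) := by
  refine isOrthostochasticImage_of_submajorized ?_ (submajorized_blockTarget hξ hmaj hmin) ?_
  · intro a _ b _ hab
    simp only [blockSource]
    split_ifs with hb ha ha
    · exact le_rfl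
    · omega
    · rw [surplus]
      linarith [hη (show P ≤ P + b by omega), hmaj.deficit_nonneg P]
    · exact hη (by omega)
  · rw [sum_range_succ, sum_blockTarget_of_notMem notMem_range_self,
      sum_shift_eq_deficit_sub_add (η := η), sum_range_blockSource, sum_range_succ]
    simp only [blockTarget, ↓reduceIte, surplus]
    ring

end Block

lemma hasSum_mul_of_tendsto_subseq {a b : ℕ → ℝ} {C c : ℝ} {φ : ℕ → ℕ} (hφ : StrictMono φ)
    (ha : ∀ n, ∑ i ∈ range n, a i ^ 2 ≤ C) (hb : ∀ n, ∑ i ∈ range n, b i ^ 2 ≤ C)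
    (h : Tendsto (fun K => ∑ i ∈ range (φ K), a i * b i) atTop (nhds c)) :
    HasSum (fun i => a i * b i) c := by
  have hsa := summable_of_sum_range_le (fun i => sq_nonneg (a i)) ha
  have hsb := summable_of_sum_range_le (fun i => sq_nonneg (b i)) hb
  have hs : Summable fun i => a i * b i :=
    .of_norm_bounded ((hsa.add hsb).mul_left (1 / 2)) fun i => by
      rw [Real.norm_eq_abs, abs_mul]
      nlinarith [two_mul_le_add_sq |a i| |b i|, sq_abs (a i), sq_abs (b i)]
  rw [← tendsto_nhds_unique (hs.hasSum.tendsto_sum_nat.comp hφ.tendsto_atTop) h]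
  exact hs.hasSum

section Staircase

variable (nk : ℕ → ℕ) (W : ℕ → ℕ → ℕ → ℝ)

/-- At stage `K` the rows `i < nk K` are final and row `nk K` is a carry vector; stage `K + 1`
mixes the carry with the coordinates `nk K + 1, …, nk (K + 1)` through the block matrix `W K`. -/
def staircase : ℕ → ℕ → ℕ → ℝ
  | 0, _, j => if j = 0 then 1 else 0
  | K + 1, i, j =>
    if i < nk K then staircase K i j
    else if j ≤ nk K then W K (i - nk K) 0 * staircase K (nk K) j
    else if j ≤ nk (K + 1) then W K (i - nk K) (j - nk K) else 0

def staircaseLimit (i : ℕ) : ℕ → ℝ := staircase nk W (i + 1) i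

variable {nk W}

lemma staircase_succ_of_lt {K i : ℕ} (hi : i < nk K) :
    staircase nk W (K + 1) i = staircase nk W K i := by
  funext j
  simp [staircase, hi]

lemma staircase_succ_of_le {K i j : ℕ} (hi : nk K ≤ i) (hj : j ≤ nk K) :
    staircase nk W (K + 1) i j = W K (i - nk K) 0 * staircase nk W K (nk K) j := by
  simp [staircase, not_lt.mpr hi, hj]

lemma staircase_succ_add {K i u : ℕ} (hi : nk K ≤ i)
    (hu : u < nk (K + 1) - nk K) :
    staircase nk W (K + 1) i (nk K + 1 + u) = W K (i - nk K) (u + 1) := by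
  simp only [staircase, not_lt.mpr hi, if_false, show ¬nk K + 1 + u ≤ nk K by omega,
    show nk K + 1 + u ≤ nk (K + 1) by omega, if_true]
  congr 1
  omega

lemma staircase_eq_zero (hnk : StrictMono nk) {K j : ℕ} (hj : nk K < j) (i : ℕ) :
    staircase nk W K i j = 0 := by
  induction K generalizing i with
  | zero => simp [staircase]; omega
  | succ K ih =>
    have := hnk (Nat.lt_add_one K)
    simp only [staircase]
    split_ifs <;> first | rfl | omega | exact ih (by omega) _

lemma staircase_eq_of_le (hnk : StrictMono nk) {K K' i : ℕ} (hK : K ≤ K') (hi : i < nk K) :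
    staircase nk W K' i = staircase nk W K i := by
  induction K', hK using Nat.le_induction with
  | base => rfl
  | succ K' hKK' ih => rw [staircase_succ_of_lt (hi.trans_le (hnk.monotone hKK')), ih]

lemma sum_range_nk_succ (hnk : StrictMono nk) (K : ℕ) (f : ℕ → ℝ) :
    ∑ j ∈ range (nk (K + 1) + 1), f j =
      ∑ j ∈ range (nk K + 1), f j + ∑ u ∈ range (nk (K + 1) - nk K), f (nk K + 1 + u) := by
  rw [← sum_range_add]
  congr 2
  have := hnk (Nat.lt_add_one K)
  omega

lemma sum_staircase_succ_mul_of_lt (hnk : StrictMono nk) {K i : ℕ} (hi : i < nk K) (f : ℕ → ℝ) :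
    ∑ j ∈ range (nk (K + 1) + 1), staircase nk W (K + 1) i j * f j =
      ∑ j ∈ range (nk K + 1), staircase nk W K i j * f j := by
  rw [sum_range_nk_succ hnk, staircase_succ_of_lt hi, add_eq_left]
  exact sum_eq_zero fun u _ => by rw [staircase_eq_zero hnk (by omega), zero_mul]

lemma sum_staircase_succ_mul_of_lt_of_le (hnk : StrictMono nk) {K i i' : ℕ} (hi : i < nk K)
    (hi' : nk K ≤ i') :
    ∑ j ∈ range (nk (K + 1) + 1), staircase nk W (K + 1) i j * staircase nk W (K + 1) i' j =
      W K (i' - nk K) 0 *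
        ∑ j ∈ range (nk K + 1), staircase nk W K i j * staircase nk W K (nk K) j := by
  rw [sum_staircase_succ_mul_of_lt hnk hi, mul_sum]
  refine sum_congr rfl fun j hj => ?_
  rw [staircase_succ_of_le hi' (mem_range_succ_iff.mp hj)]
  ring

lemma sum_staircase_succ_mul_of_le (hnk : StrictMono nk) {K i i' : ℕ} (hi : nk K ≤ i)
    (hi' : nk K ≤ i') (z : ℕ → ℝ) :
    ∑ j ∈ range (nk (K + 1) + 1), staircase nk W (K + 1) i j * staircase nk W (K + 1) i' j * z j =
      ∑ u ∈ range (nk (K + 1) - nk K + 1), W K (i - nk K) u * W K (i' - nk K) u *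
        (if u = 0 then ∑ j ∈ range (nk K + 1), staircase nk W K (nk K) j ^ 2 * z j
          else z (nk K + u)) := by
  rw [sum_range_nk_succ hnk, sum_range_succ' _ (nk (K + 1) - nk K), add_comm]
  congr 1
  · refine sum_congr rfl fun u hu => ?_
    rw [staircase_succ_add hi (mem_range.mp hu), staircase_succ_add hi' (mem_range.mp hu),
      if_neg u.succ_ne_zero, show nk K + 1 + u = nk K + (u + 1) by ring]
  · rw [if_pos rfl, mul_sum]
    refine sum_congr rfl fun j hj => ?_
    rw [staircase_succ_of_le hi (mem_range_succ_iff.mp hj),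
      staircase_succ_of_le hi' (mem_range_succ_iff.mp hj)]
    ring

lemma orthonormalRows_staircase (hnk : StrictMono nk) (hnk₀ : nk 0 = 0)
    (hW : ∀ K, OrthonormalRows (nk (K + 1) - nk K + 1) (W K)) (K : ℕ) :
    OrthonormalRows (nk K + 1) (staircase nk W K) := by
  induction K with
  | zero =>
    intro i hi i' hi'
    rw [hnk₀] at hi hi'
    simp [staircase, hnk₀, show i = 0 by omega, show i' = 0 by omega]
  | succ K ih =>
    have hK := hnk (Nat.lt_add_one K)
    have hcarry : ∑ j ∈ range (nk K + 1), staircase nk W K (nk K) j ^ 2 = 1 := by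
      simpa [sq] using ih _ (Nat.lt_add_one _) _ (Nat.lt_add_one _)
    have hmixed : ∀ i < nk K, ∀ i', nk K ≤ i' → ∑ j ∈ range (nk (K + 1) + 1),
        staircase nk W (K + 1) i j * staircase nk W (K + 1) i' j = 0 :=
      fun i hi i' hi' => by
        rw [sum_staircase_succ_mul_of_lt_of_le hnk hi hi', ih i (by omega) _ (by omega),
          if_neg hi.ne, mul_zero]
    intro i hi i' hi'
    rcases lt_or_ge i (nk K) with h | h <;> rcases lt_or_ge i' (nk K) with h' | h'
    · rw [sum_staircase_succ_mul_of_lt hnk h, staircase_succ_of_lt h']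
      exact ih i (by omega) i' (by omega)
    · rw [hmixed i h i' h', if_neg (by omega)]
    · simp_rw [mul_comm (staircase nk W (K + 1) i _)]
      rw [hmixed i' h' i h, if_neg (by omega)]
    · have h₁ := sum_staircase_succ_mul_of_le (W := W) hnk h h' fun _ => 1
      simp only [mul_one, hcarry, ite_self] at h₁
      rw [h₁, hW K _ (by omega) _ (by omega)]
      simp only [show i - nk K = i' - nk K ↔ i = i' by omega]

lemma sum_sq_staircase_mul {ξ η : ℕ → ℝ} (hnk : StrictMono nk) (hnk₀ : nk 0 = 0)
    (hW : ∀ K, ∀ t < nk (K + 1) - nk K + 1,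
      ∑ u ∈ range (nk (K + 1) - nk K + 1), W K t u ^ 2 * blockSource ξ η (nk K) u =
        blockTarget ξ η (nk K) (nk (K + 1) - nk K) t)
    (K : ℕ) : ∀ i < nk K + 1, ∑ j ∈ range (nk K + 1), staircase nk W K i j ^ 2 * η j =
      if i = nk K then surplus ξ η (nk K) else ξ i := by
  induction K with
  | zero =>
    intro i hi
    rw [hnk₀] at hi ⊢
    simp [staircase, show i = 0 by omega, surplus, deficit]
  | succ K ih =>
    have hK := hnk (Nat.lt_add_one K)
    have hcarry := ih (nk K) (Nat.lt_add_one _)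
    rw [if_pos rfl] at hcarry
    intro i hi
    rcases lt_or_ge i (nk K) with h | h
    · simp_rw [sq, mul_assoc]
      rw [sum_staircase_succ_mul_of_lt hnk h, staircase_succ_of_lt h, if_neg (by omega)]
      simp_rw [← mul_assoc, ← sq]
      rw [ih i (by omega), if_neg h.ne]
    · have h₁ := sum_staircase_succ_mul_of_le (W := W) hnk h h η
      simp only [← sq, hcarry] at h₁
      rw [h₁]
      refine (hW K _ (by omega)).trans ?_
      simp only [blockTarget, Nat.add_sub_cancel' h, Nat.add_sub_cancel' hK.le,
        show i - nk K = nk (K + 1) - nk K ↔ i = nk (K + 1) by omega]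

lemma tendsto_staircase_carry {ξ η : ℕ → ℝ} (hnk : StrictMono nk)
    (hW : ∀ K, ∀ t < nk (K + 1) - nk K + 1,
      ∑ u ∈ range (nk (K + 1) - nk K + 1), W K t u ^ 2 * blockSource ξ η (nk K) u =
        blockTarget ξ η (nk K) (nk (K + 1) - nk K) t)
    (hη₀ : ∀ n, 0 ≤ η n) (hpos : ∀ n, 0 < surplus ξ η n)
    (htend : Tendsto (fun K => surplus ξ η (nk K)) atTop (nhds 0)) (j : ℕ) :
    Tendsto (fun K => staircase nk W K (nk K) j) atTop (nhds 0) := by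
  have hstep : ∀ K,
      W K (nk (K + 1) - nk K) 0 ^ 2 * surplus ξ η (nk K) ≤ surplus ξ η (nk (K + 1)) := by
    intro K
    have h := hW K _ (Nat.lt_add_one _)
    rw [blockTarget, if_pos rfl, Nat.add_sub_cancel' (hnk (Nat.lt_add_one K)).le] at h
    rw [← h]
    refine single_le_sum (f := fun u => W K (nk (K + 1) - nk K) u ^ 2 * blockSource ξ η (nk K) u)
      (fun u _ => mul_nonneg (sq_nonneg _) ?_) (mem_range.mpr (Nat.succ_pos _))
    unfold blockSource
    split_ifs
    exacts [(hpos _).le, hη₀ _]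
  -- the carry entry, measured against the surplus, can only decrease from stage `j` on
  have hchain : ∀ K ≥ j, staircase nk W K (nk K) j ^ 2 * surplus ξ η (nk j) ≤
      staircase nk W j (nk j) j ^ 2 * surplus ξ η (nk K) := by
    intro K hK
    induction K, hK using Nat.le_induction with
    | base => exact le_rfl
    | succ K hjK ih =>
      rw [staircase_succ_of_le (hnk.monotone K.le_succ) (hjK.trans (hnk.id_le K))]
      set w := W K (nk (K + 1) - nk K) 0
      calc (w * staircase nk W K (nk K) j) ^ 2 * surplus ξ η (nk j)
          = w ^ 2 * (staircase nk W K (nk K) j ^ 2 * surplus ξ η (nk j)) := by ring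
        _ ≤ w ^ 2 * (staircase nk W j (nk j) j ^ 2 * surplus ξ η (nk K)) :=
            mul_le_mul_of_nonneg_left ih (sq_nonneg _)
        _ ≤ staircase nk W j (nk j) j ^ 2 * surplus ξ η (nk (K + 1)) := by
            nlinarith [hstep K, sq_nonneg (staircase nk W j (nk j) j)]
  have hsq : Tendsto (fun K => staircase nk W K (nk K) j ^ 2) atTop (nhds 0) := by
    have hbound : Tendsto (fun K => staircase nk W j (nk j) j ^ 2 / surplus ξ η (nk j) *
        surplus ξ η (nk K)) atTop (nhds 0) := by
      simpa using htend.const_mul (staircase nk W j (nk j) j ^ 2 / surplus ξ η (nk j))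
    refine squeeze_zero' (.of_forall fun K => sq_nonneg _) ?_ hbound
    filter_upwards [eventually_ge_atTop j] with K hK
    rw [div_mul_eq_mul_div, le_div_iff₀ (hpos _)]
    exact hchain K hK
  rw [tendsto_zero_iff_abs_tendsto_zero]
  simpa [Function.comp_def, Real.sqrt_sq_eq_abs] using hsq.sqrt

lemma staircaseLimit_eq (hnk : StrictMono nk) {K i : ℕ} (hi : i < nk K) :
    staircaseLimit nk W i = staircase nk W K i :=
  (le_total K (i + 1)).elim (fun h => staircase_eq_of_le hnk h hi)
    fun h => (staircase_eq_of_le hnk h (hnk.id_le (i + 1))).symm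

lemma hasSum_staircaseLimit_mul (hnk : StrictMono nk) {K i : ℕ} (hi : i < nk K) (f : ℕ → ℝ) :
    HasSum (fun j => staircaseLimit nk W i j * f j)
      (∑ j ∈ range (nk K + 1), staircase nk W K i j * f j) := by
  rw [← staircaseLimit_eq hnk hi]
  exact hasSum_sum_of_ne_finset_zero fun j hj => by
    rw [staircaseLimit_eq hnk hi, staircase_eq_zero hnk (by simpa using hj), zero_mul]

lemma sum_staircaseLimit_mul_staircaseLimit (hnk : StrictMono nk) (hnk₀ : nk 0 = 0)
    (hW : ∀ K, OrthonormalRows (nk (K + 1) - nk K + 1) (W K)) {K j j' : ℕ} (hj : j ≤ nk K)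
    (hj' : j' ≤ nk K) :
    ∑ i ∈ range (nk K), staircaseLimit nk W i j * staircaseLimit nk W i j' =
      (if j = j' then 1 else 0) - staircase nk W K (nk K) j * staircase nk W K (nk K) j' := by
  rw [eq_sub_iff_add_eq, ← (orthonormalRows_staircase hnk hnk₀ hW K).swap j (by omega) j'
    (by omega), sum_range_succ]
  congr 1
  exact sum_congr rfl fun i hi => by rw [staircaseLimit_eq hnk (mem_range.mp hi)]

lemma sum_range_sq_staircaseLimit_le_one (hnk : StrictMono nk) (hnk₀ : nk 0 = 0)
    (hW : ∀ K, OrthonormalRows (nk (K + 1) - nk K + 1) (W K)) (j n : ℕ) :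
    ∑ i ∈ range n, staircaseLimit nk W i j ^ 2 ≤ 1 := by
  have hK : n + j ≤ nk (n + j) := hnk.id_le (n + j)
  calc ∑ i ∈ range n, staircaseLimit nk W i j ^ 2
      ≤ ∑ i ∈ range (nk (n + j)), staircaseLimit nk W i j ^ 2 :=
        sum_le_sum_of_subset_of_nonneg (range_subset_range.mpr (by omega))
          fun _ _ _ => sq_nonneg _
    _ = 1 - staircase nk W (n + j) (nk (n + j)) j ^ 2 := by
        simpa [sq] using
          sum_staircaseLimit_mul_staircaseLimit hnk hnk₀ hW (j := j) (j' := j) (by omega) (by omega)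
    _ ≤ 1 := by linarith [sq_nonneg (staircase nk W (n + j) (nk (n + j)) j)]

lemma orthogonalMatrix_staircaseLimit {ξ η : ℕ → ℝ} (hnk : StrictMono nk) (hnk₀ : nk 0 = 0)
    (hWrows : ∀ K, OrthonormalRows (nk (K + 1) - nk K + 1) (W K))
    (hW : ∀ K, ∀ t < nk (K + 1) - nk K + 1,
      ∑ u ∈ range (nk (K + 1) - nk K + 1), W K t u ^ 2 * blockSource ξ η (nk K) u =
        blockTarget ξ η (nk K) (nk (K + 1) - nk K) t)
    (hη₀ : ∀ n, 0 ≤ η n) (hpos : ∀ n, 0 < surplus ξ η n)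
    (htend : Tendsto (fun K => surplus ξ η (nk K)) atTop (nhds 0)) :
    OrthogonalMatrix (staircaseLimit nk W) := by
  refine ⟨fun i i' => ?_, fun j j' => ?_⟩
  · have hK : ∀ m ≤ i + i', m < nk (i + i' + 1) := fun m hm =>
      lt_of_lt_of_le (show m < nk (m + 1) from hnk.id_le (m + 1)) (hnk.monotone (by omega))
    have hi := hK i (by omega)
    have hi' := hK i' (by omega)
    convert hasSum_staircaseLimit_mul hnk hi (staircaseLimit nk W i') using 1
    rw [staircaseLimit_eq hnk hi',
      orthonormalRows_staircase hnk hnk₀ hWrows _ i (by omega) i' (by omega)]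
  · have hcarry := (tendsto_staircase_carry hnk hW hη₀ hpos htend j).mul
      (tendsto_staircase_carry hnk hW hη₀ hpos htend j')
    rw [mul_zero] at hcarry
    refine hasSum_mul_of_tendsto_subseq hnk
      (sum_range_sq_staircaseLimit_le_one hnk hnk₀ hWrows j)
      (sum_range_sq_staircaseLimit_le_one hnk hnk₀ hWrows j') ?_
    have hlim : Tendsto (fun K => (if j = j' then (1 : ℝ) else 0) -
        staircase nk W K (nk K) j * staircase nk W K (nk K) j') atTop
          (nhds (if j = j' then 1 else 0)) := by
      simpa using tendsto_const_nhds.sub hcarry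
    refine hlim.congr' ?_
    filter_upwards [eventually_ge_atTop (j + j')] with K hK
    have hK' : K ≤ nk K := hnk.id_le K
    rw [sum_staircaseLimit_mul_staircaseLimit hnk hnk₀ hWrows (by omega) (by omega)]

lemma hasSum_sq_staircaseLimit_mul {ξ η : ℕ → ℝ} (hnk : StrictMono nk) (hnk₀ : nk 0 = 0)
    (hW : ∀ K, ∀ t < nk (K + 1) - nk K + 1,
      ∑ u ∈ range (nk (K + 1) - nk K + 1), W K t u ^ 2 * blockSource ξ η (nk K) u =
        blockTarget ξ η (nk K) (nk (K + 1) - nk K) t) (i : ℕ) :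
    HasSum (fun j => staircaseLimit nk W i j ^ 2 * η j) (ξ i) := by
  have hi : i < nk (i + 1) := hnk.id_le (i + 1)
  have h := sum_sq_staircase_mul hnk hnk₀ hW (i + 1) i (by omega)
  rw [if_neg hi.ne] at h
  rw [← h]
  simp_rw [sq, mul_assoc]
  exact hasSum_staircaseLimit_mul hnk hi _

end Staircase

def extendById (N : ℕ) (U : ℕ → ℕ → ℝ) (i j : ℕ) : ℝ :=
  if i < N ∧ j < N then U i j else if i = j then 1 else 0

lemma extendById_of_le {N i : ℕ} (U : ℕ → ℕ → ℝ) (hi : N ≤ i) (j : ℕ) :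
    extendById N U i j = if j = i then 1 else 0 := by
  simp [extendById, not_lt.mpr hi, eq_comm]

lemma OrthonormalRows.hasSum_extendById {N : ℕ} {U : ℕ → ℕ → ℝ} (hU : OrthonormalRows N U)
    (i i' : ℕ) :
    HasSum (fun j => extendById N U i j * extendById N U i' j) (if i = i' then 1 else 0) := by
  by_cases hi : N ≤ i
  · have hf : (fun j => extendById N U i j * extendById N U i' j) =
        fun j => if j = i then extendById N U i' i else 0 := by
      funext j
      rw [extendById_of_le U hi]
      split_ifs with h <;> simp [h]
    rw [hf]
    convert hasSum_ite_eq i (extendById N U i' i) using 1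
    simp [extendById, not_lt.mpr hi, eq_comm]
  by_cases hi' : N ≤ i'
  · have hf : ∀ j, extendById N U i j * extendById N U i' j = 0 := fun j => by
      rw [extendById_of_le U hi']
      split_ifs with h
      · simp [extendById, h, not_lt.mpr hi', show i ≠ i' by omega]
      · ring
    simp only [hf, if_neg (show i ≠ i' by omega)]
    exact hasSum_zero
  rw [not_le] at hi hi'
  rw [← hU i hi i' hi']
  convert hasSum_sum_of_ne_finset_zero (L := SummationFilter.unconditional ℕ) (s := range N)
    fun j hj => ?_ using 1
  · exact sum_congr rfl fun j hj => by simp [extendById, hi, hi', mem_range.mp hj]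
  · have hj : N ≤ j := by simpa using hj
    simp [extendById, not_lt.mpr hj, show i ≠ j by omega]

lemma OrthonormalRows.orthogonalMatrix_extendById {N : ℕ} {U : ℕ → ℕ → ℝ}
    (hU : OrthonormalRows N U) : OrthogonalMatrix (extendById N U) := by
  refine ⟨hU.hasSum_extendById, fun j j' => ?_⟩
  have h : ∀ i j, extendById N (Function.swap U) j i = extendById N U i j := fun i j => by
    simp [extendById, and_comm, eq_comm]
  simpa only [h] using hU.swap.hasSum_extendById j j'

section Existence

variable {ξ η : ℕ → ℝ}

theorem exists_orthogonal_of_surplus_eq_zero (hξ₀ : ∀ n, 0 ≤ ξ n) (hξ : Antitone ξ)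
    (hη₀ : ∀ n, 0 ≤ η n) (hη : Antitone η) (hmaj : Maj ξ η) {n : ℕ} (hn : surplus ξ η n = 0) :
    ∃ U : ℕ → ℕ → ℝ, OrthogonalMatrix U ∧ ∀ i, HasSum (fun j => U i j ^ 2 * η j) (ξ i) := by
  have htail : ∀ m ≥ n, surplus ξ η m = 0 := fun m hm => by
    induction m, hm using Nat.le_induction with
    | base => exact hn
    | succ m _ ih => exact (surplus_succ_eq_zero hξ₀ hη₀ hη hmaj ih).1
  have hξtail : ∀ m ≥ n, ξ m = 0 := fun m hm =>
    (surplus_succ_eq_zero hξ₀ hη₀ hη hmaj (htail m hm)).2.1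
  have hηtail : ∀ m ≥ n, η m = 0 := fun m hm =>
    (surplus_succ_eq_zero hξ₀ hη₀ hη hmaj (htail m hm)).2.2
  have hsum : ∑ i ∈ range n, ξ i = ∑ i ∈ range n, η i := by
    have h : deficit ξ η n = 0 := by rw [surplus, hηtail n le_rfl] at hn; simpa using hn
    rw [deficit, sum_sub_distrib, sub_eq_zero] at h
    exact h.symm
  obtain ⟨U, hU, hval⟩ :=
    isOrthostochasticImage_of_submajorized (hη.antitoneOn _) (hmaj.submajorized hξ n) hsum
  refine ⟨extendById n U, hU.orthogonalMatrix_extendById, fun i => ?_⟩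
  convert hasSum_sum_of_ne_finset_zero (L := SummationFilter.unconditional ℕ) (s := range n)
    (f := fun j => extendById n U i j ^ 2 * η j)
    fun j hj => by rw [hηtail j (by simpa using hj), mul_zero] using 1
  by_cases hi : i < n
  · rw [← hval i hi]
    exact sum_congr rfl fun j hj => by simp [extendById, hi, mem_range.mp hj]
  · rw [hξtail i (not_lt.mp hi)]
    exact (sum_eq_zero fun j hj => by
      simp [extendById, hi, show i ≠ j by have := mem_range.mp hj; omega]).symm

theorem exists_orthogonal_of_surplus_pos (hξ : Antitone ξ) (hη₀ : ∀ n, 0 ≤ η n)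
    (hη : Antitone η) (hη_lim : Tendsto η atTop (nhds 0)) (hmaj : SMaj ξ η)
    (hpos : ∀ n, 0 < surplus ξ η n) :
    ∃ U : ℕ → ℕ → ℝ, OrthogonalMatrix U ∧ ∀ i, HasSum (fun j => U i j ^ 2 * η j) (ξ i) := by
  obtain ⟨nk, hnk, hnk₀, hmin, htend⟩ := exists_strictMono_forall_le_tendsto_zero hpos
    fun ε hε => hmaj.frequently_surplus_lt hη_lim hε
  have hblock : ∀ K, IsOrthostochasticImage (nk (K + 1) - nk K + 1)
      (blockTarget ξ η (nk K) (nk (K + 1) - nk K)) (blockSource ξ η (nk K)) := fun K =>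
    isOrthostochasticImage_block hξ hη hmaj.1 fun m hm => by
      have := hnk (Nat.lt_add_one K)
      rw [Nat.add_sub_cancel' this.le]
      exact hmin (K + 1) _ (by omega)
  choose W hWrows hW using hblock
  exact ⟨staircaseLimit nk W, orthogonalMatrix_staircaseLimit hnk hnk₀ hWrows hW hη₀ hpos htend,
    hasSum_sq_staircaseLimit_mul hnk hnk₀ hW⟩

end Existence

/-- If `ξ, η ∈ c₀*` and `ξ ≼ η`, then `ξ = Qη` for some orthostochastic
matrix `Q`. -/
theorem stmt_8 (ξ η : ℕ → ℝ) (hξ : IsCoStar ξ) (hη : IsCoStar η) (hmaj : SMaj ξ η) :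
    ∃ Q : ℕ → ℕ → ℝ, Orthostochastic Q ∧
      ∀ i, HasSum (fun j => Q i j * η j) (ξ i) := by
  obtain ⟨hξ₀, hξ, -⟩ := hξ
  obtain ⟨hη₀, hη, hη_lim⟩ := hη
  suffices ∃ U : ℕ → ℕ → ℝ, OrthogonalMatrix U ∧ ∀ i, HasSum (fun j => U i j ^ 2 * η j) (ξ i) by
    obtain ⟨U, hU, hsum⟩ := this
    exact ⟨fun i j => U i j ^ 2, ⟨U, hU, fun _ _ => rfl⟩, hsum⟩
  by_cases hpos : ∀ n, 0 < surplus ξ η n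
  · exact exists_orthogonal_of_surplus_pos hξ hη₀ hη hη_lim hmaj hpos
  · simp only [not_forall, not_lt] at hpos
    obtain ⟨n, hn⟩ := hpos
    exact exists_orthogonal_of_surplus_eq_zero hξ₀ hξ hη₀ hη hmaj.1
      (le_antisymm hn (hmaj.1.surplus_nonneg hη₀ n))
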